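/- arXiv:2308.15158 — 3 statements merged into one kernel-verified Lean document; each statement's English description precedes it below -/
import Mathlib

section
/- Define L_n for n ≥ 0 by L_0 = L_1 = 1, L_2 = 2, and for n ≥ 3, L_n = Σ_{i=0}^{n} C(n,i) p^i q^{n−i} (L_i + L_{n−i}), where q = 1−p and p ∈ (0,1). Then for all n ≥ 0, L_n = 1 + Σ_{i=2}^{n} C(n,i) · (−1)^i · (i−1 + r·i·(i−1)/2) / (1 − p^i − q^i), where r = 2 − 4pq − 3(p²+q²). -/
/-!
Write `f(k) = k - 1 + r k (k - 1) / 2` and `a_k = (-1)^k f(k) / (1 - p^k - q^k)`; the claimed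
closed form is the binomial transform `M_n = ∑ C(n,k) a_k`. Averaging a binomial transform against
the binomial weights `C(n,i) x^i y^(n-i)` with `x + y = 1` gives `∑ C(n,k) a_k x^k`, so `M` satisfies
the recursion for `n` exactly when `∑ C(n,k) a_k (1 - p^k - q^k) = ∑ C(n,k) (-1)^k f(k)` vanishes,
and this is an `n`-th finite difference of a quadratic polynomial, hence zero for `n ≥ 3`. As the
coefficient `p^n + q^n` of `L_n` on the right of the recursion is `< 1`, the recursion and the
initial values `1, 1, 2` determine `L`, so `L = M`.
-/

open Finset Polynomial

section Binomial

variable {R : Type*}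

theorem sum_range_choose_mul_choose_mul_pow_mul_pow [CommSemiring R] (x y : R) (n k : ℕ) :
    ∑ i ∈ range (n + 1), (n.choose i : R) * i.choose k * x ^ i * y ^ (n - i)
      = n.choose k * x ^ k * (x + y) ^ (n - k) := by
  rcases lt_or_ge n k with hnk | hkn
  · rw [Nat.choose_eq_zero_of_lt hnk, Nat.cast_zero, zero_mul, zero_mul]
    refine sum_eq_zero fun i hi => ?_
    have hik : i < k := by grind
    simp [Nat.choose_eq_zero_of_lt hik]
  obtain ⟨m, rfl⟩ := Nat.exists_eq_add_of_le hkn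
  have hlow : ∑ i ∈ range k, ((k + m).choose i : R) * i.choose k * x ^ i * y ^ (k + m - i) = 0 :=
    sum_eq_zero fun i hi => by simp [Nat.choose_eq_zero_of_lt (mem_range.1 hi)]
  rw [Nat.add_sub_cancel_left, add_pow, mul_sum, add_assoc, sum_range_add, hlow, zero_add]
  refine sum_congr rfl fun j _ => ?_
  have hchoose : ((k + m).choose (k + j) : R) * (k + j).choose k
      = (k + m).choose k * m.choose j := by
    have h := Nat.choose_mul (n := k + m) (k := k + j) (s := k) (by omega)
    rw [Nat.add_sub_cancel_left, Nat.add_sub_cancel_left] at h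
    rw [← Nat.cast_mul, ← Nat.cast_mul, h]
  rw [hchoose, Nat.add_sub_add_left, pow_add]
  ring

theorem sum_range_choose_mul_pow_mul_pow_mul_sum_choose [CommSemiring R] (a : ℕ → R)
    (x y : R) (n : ℕ) :
    ∑ i ∈ range (n + 1), (n.choose i : R) * x ^ i * y ^ (n - i) *
        ∑ k ∈ range (i + 1), (i.choose k : R) * a k
      = ∑ k ∈ range (n + 1), (n.choose k : R) * a k * x ^ k * (x + y) ^ (n - k) := by
  have hextend : ∀ i ∈ range (n + 1), ∑ k ∈ range (i + 1), (i.choose k : R) * a k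
      = ∑ k ∈ range (n + 1), (i.choose k : R) * a k := fun i hi =>
    sum_subset (range_subset_range.2 (by grind)) fun k _ hk => by
      rw [Nat.choose_eq_zero_of_lt (by grind), Nat.cast_zero, zero_mul]
  rw [sum_congr rfl fun i hi => by rw [hextend i hi, mul_sum], sum_comm]
  refine sum_congr rfl fun k _ => ?_
  rw [show (n.choose k : R) * a k * x ^ k * (x + y) ^ (n - k)
      = n.choose k * x ^ k * (x + y) ^ (n - k) * a k by ring,
    ← sum_range_choose_mul_choose_mul_pow_mul_pow x y n k, sum_mul]
  exact sum_congr rfl fun i _ => by ring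

theorem sum_range_choose_mul_neg_one_pow_mul_eval_eq_zero [CommRing R] {P : R[X]} {n : ℕ}
    (hP : P.natDegree < n) :
    ∑ k ∈ range (n + 1), (n.choose k : R) * (-1) ^ k * P.eval (k : R) = 0 := by
  have h := congr_fun (fwdDiff_iter_eq_zero_of_degree_lt hP) 0
  rw [fwdDiff_iter_eq_sum_shift] at h
  have hsign_flip : ∑ k ∈ range (n + 1), (n.choose k : R) * (-1) ^ k * P.eval (k : R)
      = (-1) ^ n * ∑ k ∈ range (n + 1), ((-1 : ℤ) ^ (n - k) * n.choose k) • P.eval (0 + k • 1) := by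
    rw [mul_sum]
    refine sum_congr rfl fun k hk => ?_
    have hsign : (-1 : R) ^ n * (-1) ^ (n - k) = (-1) ^ k := by
      rw [← pow_add, show n + (n - k) = k + 2 * (n - k) by grind, pow_add, pow_mul]
      simp
    simp only [zsmul_eq_mul, nsmul_eq_mul, mul_one, zero_add]
    push_cast
    linear_combination (n.choose k * P.eval (k : R)) * hsign.symm
  rw [hsign_flip]
  simpa using h

end Binomial

theorem pow_add_pow_lt_one {p q : ℝ} (hp : 0 < p) (hq : 0 < q) (hpq : p + q = 1) {n : ℕ}
    (hn : 2 ≤ n) : p ^ n + q ^ n < 1 := by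
  have hp' : p ^ n < p := pow_lt_self_of_lt_one₀ hp (by linarith) (by omega)
  have hq' : q ^ n < q := pow_lt_self_of_lt_one₀ hq (by linarith) (by omega)
  linarith

namespace ATIC

def splitSum (p q : ℝ) (L : ℕ → ℝ) (n : ℕ) : ℝ :=
  ∑ i ∈ range (n + 1), (n.choose i : ℝ) * p ^ i * q ^ (n - i) * (L i + L (n - i))

variable {p q : ℝ}

theorem splitSum_sub (L M : ℕ → ℝ) (n : ℕ) :
    splitSum p q (L - M) n = splitSum p q L n - splitSum p q M n := by
  simp only [splitSum, ← sum_sub_distrib, Pi.sub_apply]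
  exact sum_congr rfl fun i _ => by ring

theorem splitSum_eq_add (L : ℕ → ℝ) (n : ℕ) :
    splitSum p q L n = ∑ i ∈ range (n + 1), (n.choose i : ℝ) * p ^ i * q ^ (n - i) * L i
      + ∑ i ∈ range (n + 1), (n.choose i : ℝ) * q ^ i * p ^ (n - i) * L i := by
  have hreflect : ∑ i ∈ range (n + 1), (n.choose i : ℝ) * p ^ i * q ^ (n - i) * L (n - i)
      = ∑ i ∈ range (n + 1), (n.choose i : ℝ) * q ^ i * p ^ (n - i) * L i := by
    rw [← sum_range_reflect]
    refine sum_congr rfl fun i hi => ?_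
    have hi : i ≤ n := Nat.lt_succ_iff.1 (mem_range.1 hi)
    rw [Nat.add_sub_cancel, Nat.sub_sub_self hi, Nat.choose_symm hi]
    ring
  rw [splitSum, ← hreflect, ← sum_add_distrib]
  exact sum_congr rfl fun i _ => by ring

theorem splitSum_of_forall_lt_eq_zero {D : ℕ → ℝ} {n : ℕ} (hD : ∀ i < n, D i = 0) :
    splitSum p q D n = (p ^ n + q ^ n) * D n := by
  have hsum (x y : ℝ) :
      ∑ i ∈ range (n + 1), (n.choose i : ℝ) * x ^ i * y ^ (n - i) * D i = x ^ n * D n := by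
    rw [sum_range_succ, sum_eq_zero fun i hi => by rw [hD i (mem_range.1 hi), mul_zero]]
    simp
  rw [splitSum_eq_add, hsum, hsum]
  ring

theorem eq_of_eq_splitSum {m : ℕ} (hpq : ∀ n, m ≤ n → p ^ n + q ^ n ≠ 1) {L M : ℕ → ℝ}
    (hL : ∀ n, m ≤ n → L n = splitSum p q L n) (hM : ∀ n, m ≤ n → M n = splitSum p q M n)
    (hinit : ∀ n < m, L n = M n) : L = M := by
  funext n
  induction n using Nat.strong_induction_on with
  | _ n ih =>
    rcases lt_or_ge n m with hn | hn
    · exact hinit n hn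
    have hD : (L - M) n = (p ^ n + q ^ n) * (L - M) n := by
      rw [← splitSum_of_forall_lt_eq_zero (D := L - M) fun i hi => sub_eq_zero.2 (ih i hi),
        splitSum_sub, Pi.sub_apply, ← hL n hn, ← hM n hn]
    have hfactor : (1 - (p ^ n + q ^ n)) * (L - M) n = 0 := by linear_combination hD
    have hne : 1 - (p ^ n + q ^ n) ≠ 0 := sub_ne_zero.2 (hpq n hn).symm
    exact sub_eq_zero.1 ((mul_eq_zero.1 hfactor).resolve_left hne)

noncomputable def binomialTransform (a : ℕ → ℝ) (n : ℕ) : ℝ :=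
  ∑ k ∈ range (n + 1), (n.choose k : ℝ) * a k

theorem splitSum_binomialTransform (hpq : p + q = 1) (a : ℕ → ℝ) (n : ℕ) :
    splitSum p q (binomialTransform a) n
      = ∑ k ∈ range (n + 1), (n.choose k : ℝ) * a k * (p ^ k + q ^ k) := by
  simp only [splitSum_eq_add, binomialTransform, sum_range_choose_mul_pow_mul_pow_mul_sum_choose,
    hpq, add_comm q p, one_pow, mul_one, ← sum_add_distrib, mul_add]

theorem binomialTransform_eq_splitSum (hpq : p + q = 1) {a : ℕ → ℝ} {n : ℕ}
    (ha : ∑ k ∈ range (n + 1), (n.choose k : ℝ) * (a k * (1 - p ^ k - q ^ k)) = 0) :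
    binomialTransform a n = splitSum p q (binomialTransform a) n := by
  rw [splitSum_binomialTransform hpq, binomialTransform, ← sub_eq_zero, ← sum_sub_distrib, ← ha]
  exact sum_congr rfl fun k _ => by ring

noncomputable def numerator (r : ℝ) (k : ℕ) : ℝ := ((k : ℝ) - 1) + r * k * ((k : ℝ) - 1) / 2

/-- At `k = 0` this is `1`, and at `k = 1` it is `0` whatever the value of the division, since
the numerator vanishes. -/
noncomputable def weight (p q r : ℝ) (k : ℕ) : ℝ := (-1) ^ k * numerator r k / (1 - p ^ k - q ^ k)

@[simp]
theorem weight_zero (p q r : ℝ) : weight p q r 0 = 1 := by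
  norm_num [weight, numerator]

@[simp]
theorem weight_one (p q r : ℝ) : weight p q r 1 = 0 := by
  simp [weight, numerator]

theorem weight_mul_denom (hp : 0 < p) (hq : 0 < q) (hpq : p + q = 1) (r : ℝ) (k : ℕ) :
    weight p q r k * (1 - p ^ k - q ^ k) = (-1) ^ k * numerator r k := by
  rcases Nat.lt_trichotomy k 1 with hk | rfl | hk
  · obtain rfl : k = 0 := by omega
    norm_num [numerator]
  · simp [numerator]
  · have hdenom : 1 - p ^ k - q ^ k ≠ 0 := by
      linarith [pow_add_pow_lt_one hp hq hpq (n := k) hk]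
    exact div_mul_cancel₀ _ hdenom

theorem sum_choose_mul_weight_mul_denom (hp : 0 < p) (hq : 0 < q) (hpq : p + q = 1) (r : ℝ)
    {n : ℕ} (hn : 3 ≤ n) :
    ∑ k ∈ range (n + 1), (n.choose k : ℝ) * (weight p q r k * (1 - p ^ k - q ^ k)) = 0 := by
  have hdeg : (X - 1 + C (r / 2) * X * (X - 1) : ℝ[X]).natDegree < n := by
    have : (X - 1 + C (r / 2) * X * (X - 1) : ℝ[X]).natDegree ≤ 2 := by compute_degree
    omega
  rw [← sum_range_choose_mul_neg_one_pow_mul_eval_eq_zero hdeg]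
  refine sum_congr rfl fun k _ => ?_
  rw [weight_mul_denom hp hq hpq, numerator]
  simp only [eval_add, eval_sub, eval_mul, eval_X, eval_one, eval_C]
  ring

theorem weight_two (hp : 0 < p) (hq : 0 < q) (hpq : p + q = 1) {r : ℝ}
    (hr : r = 2 - 4 * p * q - 3 * (p ^ 2 + q ^ 2)) : weight p q r 2 = 1 := by
  have hdenom : 1 - p ^ 2 - q ^ 2 = 2 * p * q := by
    rw [← one_pow 2, ← hpq]; ring
  have hnumerator : numerator r 2 = 2 * p * q := by
    rw [numerator, hr]; push_cast
    linear_combination 3 * hdenom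
  rw [weight, hnumerator, hdenom]
  field_simp

theorem binomialTransform_weight (p q r : ℝ) (n : ℕ) :
    binomialTransform (weight p q r) n = 1 + ∑ i ∈ Icc 2 n,
      (n.choose i : ℝ) * (-1) ^ i * ((i - 1) + r * i * (i - 1) / 2) / (1 - p ^ i - q ^ i) := by
  rcases n with _ | n
  · simp [binomialTransform]
  rw [binomialTransform, range_eq_Ico, ← sum_Ico_consecutive _ (Nat.zero_le 2) (by omega),
    ← range_eq_Ico, Ico_add_one_right_eq_Icc]
  simp only [sum_range_succ, sum_range_zero]
  congr 1
  · simp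
  · exact sum_congr rfl fun i _ => by rw [weight, numerator]; ring

end ATIC

theorem stmt_4 (p q r : ℝ) (hp0 : 0 < p) (hp1 : p < 1) (hq : q = 1 - p)
    (hr : r = 2 - 4*p*q - 3*(p^2 + q^2))
    (L : ℕ → ℝ) (hL0 : L 0 = 1) (hL1 : L 1 = 1) (hL2 : L 2 = 2)
    (hLrec : ∀ n, 3 ≤ n →
      L n = ∑ i ∈ Finset.range (n + 1),
        (n.choose i : ℝ) * p ^ i * q ^ (n - i) * (L i + L (n - i))) :
    ∀ n, L n = 1 + ∑ i ∈ Finset.Icc 2 n,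
      (n.choose i : ℝ) * (-1) ^ i * ((i - 1) + r * i * (i - 1) / 2)
        / (1 - p ^ i - q ^ i) := by
  have hq0 : 0 < q := by linarith
  have hpq : p + q = 1 := by linarith
  have hinit : ∀ n < 3, L n = ATIC.binomialTransform (ATIC.weight p q r) n := by
    intro n hn
    interval_cases n <;> norm_num [hL0, hL1, hL2, ATIC.binomialTransform, sum_range_succ,
      ATIC.weight_two hp0 hq0 hpq hr]
  have hL : L = ATIC.binomialTransform (ATIC.weight p q r) :=
    ATIC.eq_of_eq_splitSum (fun n hn => (pow_add_pow_lt_one hp0 hq0 hpq (by omega)).ne) hLrec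
      (fun n hn => ATIC.binomialTransform_eq_splitSum hpq
        (ATIC.sum_choose_mul_weight_mul_denom hp0 hq0 hpq r hn)) hinit
  intro n
  rw [hL, ATIC.binomialTransform_weight]
end

section
/- The function f(p) = (p² − p − 1/2)/((1−p)·log(1−p) + p·log p) on (0,1) attains its minimum (in absolute value of the throughput expression, equivalently the expression n/L_n leading term 1/f is maximized) at p = 1/2, where f(1/2) = (−3/4)/(−log 2) = 3/(4 log 2), so the leading throughput term is 4 log 2 / 3. -/
/-!
The denominator is `-H(p)`, with `H` the binary entropy, so the claim is
`3 H(p) ≤ 4 log 2 (1/2 + p - p²)` with equality only at `p = 1/2`. The difference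
`φ = 4 log 2 (1/2 + p - p²) - 3 H` is strictly convex on `[0, 1]`, because
`φ'' = 3 / (p (1 - p)) - 8 log 2 ≥ 12 - 8 log 2 > 0`, and both `φ` and `φ'` vanish at `1/2`.
-/

open Real Set

theorem strictConvexOn_of_hasDerivAt2_pos {D : Set ℝ} (hD : Convex ℝ D) {f f' f'' : ℝ → ℝ}
    (hf : ContinuousOn f D) (hf' : ∀ x ∈ interior D, HasDerivAt f (f' x) x)
    (hf'' : ∀ x ∈ interior D, HasDerivAt f' (f'' x) x)
    (hf''₀ : ∀ x ∈ interior D, 0 < f'' x) : StrictConvexOn ℝ D f := by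
  have hmono : StrictMonoOn f' (interior D) :=
    strictMonoOn_of_hasDerivWithinAt_pos hD.interior
      (fun x hx ↦ (hf'' x hx).continuousAt.continuousWithinAt)
      (by simpa only [interior_interior] using fun x hx ↦ (hf'' x hx).hasDerivWithinAt)
      (by simpa only [interior_interior] using hf''₀)
  exact (hmono.congr fun x hx ↦ (hf' x hx).deriv.symm).strictConvexOn_of_deriv hD hf

theorem StrictConvexOn.lt_of_hasDerivAt_eq_zero {S : Set ℝ} {f : ℝ → ℝ} {a x : ℝ}
    (hfc : StrictConvexOn ℝ S f) (ha : a ∈ S) (hx : x ∈ S) (hxa : x ≠ a)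
    (hf : HasDerivAt f 0 a) : f a < f x := by
  rcases hxa.lt_or_gt with hlt | hgt
  · have := hfc.slope_lt_of_hasDerivAt hx ha hlt hf
    rw [slope_def_field, div_neg_iff] at this
    rcases this with h | h <;> linarith [h.1, h.2]
  · have := hfc.lt_slope_of_hasDerivAt ha hx hgt hf
    rw [slope_def_field, div_pos_iff] at this
    rcases this with h | h <;> linarith [h.1, h.2]

theorem three_mul_binEntropy_lt {p : ℝ} (hp₀ : 0 ≤ p) (hp₁ : p ≤ 1) (hp : p ≠ 2⁻¹) :
    3 * binEntropy p < 4 * log 2 * (1 / 2 + p - p ^ 2) := by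
  set φ : ℝ → ℝ := fun x ↦ 4 * log 2 * (1 / 2 + x - x ^ 2) - 3 * binEntropy x
  have hφ' : ∀ x ∈ Ioo (0 : ℝ) 1,
      HasDerivAt φ (4 * log 2 * (1 - 2 * x) - 3 * (log (1 - x) - log x)) x := by
    rintro x ⟨hx₀, hx₁⟩
    have h := (((hasDerivAt_id x).const_add (1 / 2)).fun_sub (hasDerivAt_pow 2 x)).const_mul
      (4 * log 2) |>.fun_sub ((hasDerivAt_binEntropy hx₀.ne' hx₁.ne).const_mul 3)
    refine h.congr_deriv ?_
    push_cast
    ring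
  have hφ'' : ∀ x ∈ Ioo (0 : ℝ) 1,
      HasDerivAt (fun x ↦ 4 * log 2 * (1 - 2 * x) - 3 * (log (1 - x) - log x))
        (3 / x + 3 / (1 - x) - 8 * log 2) x := by
    rintro x ⟨hx₀, hx₁⟩
    have h1x : 1 - x ≠ 0 := by linarith
    have h := (((hasDerivAt_id x).const_mul 2).const_sub 1).const_mul (4 * log 2)
      |>.fun_sub ((((hasDerivAt_id x).const_sub 1).log h1x).fun_sub (hasDerivAt_log hx₀.ne')
      |>.const_mul 3)
    refine h.congr_deriv ?_
    simp only [id]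
    field_simp
    ring
  have hφ''₀ : ∀ x ∈ Ioo (0 : ℝ) 1, 0 < 3 / x + 3 / (1 - x) - 8 * log 2 := by
    rintro x ⟨hx₀, hx₁⟩
    have : 3 < 3 / x := by rw [lt_div_iff₀ hx₀]; linarith
    have : 3 < 3 / (1 - x) := by rw [lt_div_iff₀ (by linarith)]; linarith
    linarith [log_two_lt_d9]
  rw [← interior_Icc] at hφ' hφ'' hφ''₀
  have hconvex : StrictConvexOn ℝ (Icc 0 1) φ :=
    strictConvexOn_of_hasDerivAt2_pos (convex_Icc 0 1) (by fun_prop) hφ' hφ'' hφ''₀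
  have hcrit : HasDerivAt φ 0 2⁻¹ := by
    convert hφ' 2⁻¹ (by norm_num [interior_Icc]) using 1
    norm_num
  have := hconvex.lt_of_hasDerivAt_eq_zero (by norm_num) ⟨hp₀, hp₁⟩ hp hcrit
  simp only [φ, binEntropy_two_inv] at this
  linarith

theorem stmt_8 (p : ℝ) (hp0 : 0 < p) (hp1 : p < 1) :
    3 / (4 * Real.log 2) ≤
      (p^2 - p - 1/2) / ((1 - p) * Real.log (1 - p) + p * Real.log p) ∧
    ((p^2 - p - 1/2) / ((1 - p) * Real.log (1 - p) + p * Real.log p)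
        = 3 / (4 * Real.log 2) ↔ p = 1/2) := by
  have hD : (1 - p) * log (1 - p) + p * log p = -binEntropy p := by
    simp only [binEntropy, log_inv]
    ring
  have hH : 0 < binEntropy p := binEntropy_pos hp0 hp1
  have hlog : 0 < 4 * log 2 := by positivity
  rw [hD, show p ^ 2 - p - 1 / 2 = -(1 / 2 + p - p ^ 2) by ring, neg_div_neg_eq,
    div_le_div_iff₀ hlog hH, div_eq_div_iff hH.ne' hlog.ne']
  rcases eq_or_ne p (1 / 2) with rfl | hp
  · rw [one_div, binEntropy_two_inv]
    exact ⟨by linarith, iff_of_true (by ring) rfl⟩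
  · have := three_mul_binEntropy_lt hp0.le hp1.le (by rwa [← one_div])
    exact ⟨by linarith, iff_of_false (by linarith) hp⟩
end

section
/- For p ∈ (0,1), q = 1−p, the alternating binomial sum identity Σ_{i=2}^{n} C(n,i)(−1)^i i(i−1) x^i evaluated at x-values p(μ): Σ_{m≥0} Σ_{μ1+μ2=m} C(m,μ1) (p^{μ1} q^{μ2})² n(n−1) (1 − p^{μ1}q^{μ2})^{n−2} = Σ_{i=2}^n C(n,i) (−1)^i i(i−1)/(1 − p^i − q^i), for every n ≥ 2 for which the left-hand series converges (it converges absolutely). -/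
/-!
Writing `x = p ^ μ * q ^ (m - μ)`, the summand is `C(m, μ)` times
`n (n - 1) x² (1 - x)^(n - 2) = ∑ᵢ C(n, i) (-1)^i i (i - 1) x^i`. Summing over `μ` with the
binomial theorem turns `x^i` into `(p^i + q^i)^m`, and for `i ≥ 2` we have `p^i + q^i < 1`, so
summing the resulting finitely many geometric series over `m` gives the right-hand side.
-/

open Finset

theorem Nat.add_two_choose_add_two_mul (k j : ℕ) :
    (k + 2).choose (j + 2) * ((j + 2) * (j + 1)) = (k + 2) * (k + 1) * k.choose j := by
  rw [← mul_assoc, ← Nat.add_one_mul_choose_eq, mul_assoc, ← Nat.add_one_mul_choose_eq]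
  ring

theorem sum_Icc_choose_mul_mul_pow {R : Type*} [CommRing R] (y : R) (n : ℕ) :
    ∑ i ∈ Icc 2 n, (n.choose i : R) * i * (i - 1) * y ^ i
      = n * (n - 1) * y ^ 2 * (1 + y) ^ (n - 2) := by
  obtain hn | hn := lt_or_ge n 2
  · interval_cases n <;> simp
  obtain ⟨k, rfl⟩ := Nat.exists_eq_add_of_le' hn
  rw [← Ico_add_one_right_eq_Icc, sum_Ico_eq_sum_range, add_comm 1 y, add_pow, mul_sum,
    show k + 2 + 1 - 2 = k + 1 by omega, Nat.add_sub_cancel]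
  refine sum_congr rfl fun j _ => ?_
  rw [add_comm 2 j]
  have h := congrArg (Nat.cast : ℕ → R) (Nat.add_two_choose_add_two_mul k j)
  push_cast at h ⊢
  linear_combination y ^ (j + 2) * h

theorem sum_Icc_choose_mul_neg_one_pow_mul_mul_pow {R : Type*} [CommRing R] (x : R) (n : ℕ) :
    ∑ i ∈ Icc 2 n, (n.choose i : R) * (-1) ^ i * i * (i - 1) * x ^ i
      = n * (n - 1) * x ^ 2 * (1 - x) ^ (n - 2) := by
  have h := sum_Icc_choose_mul_mul_pow (-x) n
  rw [neg_sq, ← sub_eq_add_neg] at h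
  rw [← h]
  exact sum_congr rfl fun i _ => by rw [neg_pow]; ring

theorem sum_range_choose_mul_sum_mul_pow {R : Type*} [CommSemiring R] (s : Finset ℕ)
    (c : ℕ → R) (a b : R) (m : ℕ) :
    ∑ μ ∈ range (m + 1), (m.choose μ : R) * ∑ i ∈ s, c i * (a ^ μ * b ^ (m - μ)) ^ i
      = ∑ i ∈ s, c i * (a ^ i + b ^ i) ^ m := by
  simp_rw [add_pow, mul_sum]
  rw [sum_comm]
  refine sum_congr rfl fun i _ => sum_congr rfl fun μ _ => ?_
  rw [mul_pow, ← pow_mul, ← pow_mul, mul_comm μ, mul_comm (m - μ), pow_mul, pow_mul]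
  ring

theorem hasSum_sum_mul_geometric {ι K : Type*} [NormedDivisionRing K] (s : Finset ι)
    (c r : ι → K) (hr : ∀ i ∈ s, ‖r i‖ < 1) :
    HasSum (fun m : ℕ => ∑ i ∈ s, c i * r i ^ m) (∑ i ∈ s, c i / (1 - r i)) := by
  simpa only [div_eq_mul_inv] using
    hasSum_sum fun i hi => (hasSum_geometric_of_norm_lt_one (hr i hi)).mul_left (c i)

theorem pow_add_one_sub_pow_lt_one {p : ℝ} (hp0 : 0 < p) (hp1 : p < 1) {i : ℕ} (hi : 2 ≤ i) :
    p ^ i + (1 - p) ^ i < 1 := by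
  have hp : p ^ i ≤ p ^ 2 := pow_le_pow_of_le_one hp0.le hp1.le hi
  have hq : (1 - p) ^ i ≤ (1 - p) ^ 2 := pow_le_pow_of_le_one (by linarith) (by linarith) hi
  nlinarith [mul_pos hp0 (sub_pos.2 hp1)]

theorem stmt_18_general (p q : ℝ) (hp0 : 0 < p) (hp1 : p < 1) (hq : q = 1 - p)
    (n : ℕ) :
    ∑' m : ℕ, ∑ μ ∈ Finset.range (m + 1),
        (m.choose μ : ℝ) * (p ^ μ * q ^ (m - μ))^2 * n * (n - 1)
          * (1 - p ^ μ * q ^ (m - μ)) ^ (n - 2)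
      = ∑ i ∈ Finset.Icc 2 n,
          (n.choose i : ℝ) * (-1) ^ i * i * (i - 1) / (1 - p ^ i - q ^ i) := by
  have hnorm : ∀ i ∈ Icc 2 n, ‖p ^ i + q ^ i‖ < 1 := fun i hi => by
    have hq0 : 0 < q := by linarith
    rw [Real.norm_of_nonneg (by positivity), hq]
    exact pow_add_one_sub_pow_lt_one hp0 hp1 (mem_Icc.1 hi).1
  have hinner : ∀ m : ℕ, ∑ μ ∈ range (m + 1),
      (m.choose μ : ℝ) * (p ^ μ * q ^ (m - μ)) ^ 2 * n * (n - 1)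
        * (1 - p ^ μ * q ^ (m - μ)) ^ (n - 2)
      = ∑ i ∈ Icc 2 n, (n.choose i : ℝ) * (-1) ^ i * i * (i - 1) * (p ^ i + q ^ i) ^ m := by
    intro m
    rw [← sum_range_choose_mul_sum_mul_pow]
    refine sum_congr rfl fun μ _ => ?_
    rw [sum_Icc_choose_mul_neg_one_pow_mul_mul_pow]
    ring
  rw [tsum_congr hinner, (hasSum_sum_mul_geometric (Icc 2 n) _ _ hnorm).tsum_eq]
  exact sum_congr rfl fun i _ => by rw [sub_add_eq_sub_sub]

theorem stmt_18 (p q : ℝ) (hp0 : 0 < p) (hp1 : p < 1) (hq : q = 1 - p)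
    (n : ℕ) (hn : 2 ≤ n)
    (hsum : Summable fun m : ℕ =>
      ∑ μ ∈ Finset.range (m + 1),
        (m.choose μ : ℝ) * (p ^ μ * q ^ (m - μ))^2 * n * (n - 1)
          * (1 - p ^ μ * q ^ (m - μ)) ^ (n - 2)) :
    ∑' m : ℕ, ∑ μ ∈ Finset.range (m + 1),
        (m.choose μ : ℝ) * (p ^ μ * q ^ (m - μ))^2 * n * (n - 1)
          * (1 - p ^ μ * q ^ (m - μ)) ^ (n - 2)
      = ∑ i ∈ Finset.Icc 2 n,
          (n.choose i : ℝ) * (-1) ^ i * i * (i - 1) / (1 - p ^ i - q ^ i) :=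
  stmt_18_general p q hp0 hp1 hq n
end
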